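/- The Hilbert-Schmidt entanglement of the Bell state Ψ₁ equals 1/3: min over separable states ρ on ℂ²⊗ℂ² of ‖ρ − Ψ₁‖²_HS = 1/3, and the minimum is attained at the Werner state W_{ψ₁,1/3} = (1/6)𝟙 + (1/3)Ψ₁. -/

import Mathlib

open Matrix ComplexOrder Kronecker

/-- Squared Hilbert-Schmidt norm: ‖A‖²_HS = tr(A*A). -/
noncomputable def hsNormSq {n : Type*} [Fintype n] (A : Matrix n n ℂ) : ℝ :=
  (Aᴴ * A).trace.re

/-- A density matrix: positive semidefinite with trace 1. -/
def IsDensity {n : Type*} [Fintype n] [DecidableEq n] (ρ : Matrix n n ℂ) : Prop :=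
  ρ.PosSemidef ∧ ρ.trace = 1

/-- A separable (disentangled) state: a finite convex combination of
tensor products of density matrices. -/
def IsSepState {m n : Type*} [Fintype m] [Fintype n] [DecidableEq m] [DecidableEq n]
    (ρ : Matrix (m × n) (m × n) ℂ) : Prop :=
  ∃ (k : ℕ) (p : Fin k → ℝ) (ρ₁ : Fin k → Matrix m m ℂ) (ρ₂ : Fin k → Matrix n n ℂ),
    (∀ i, 0 ≤ p i) ∧ (∑ i, p i = 1) ∧ (∀ i, IsDensity (ρ₁ i)) ∧ (∀ i, IsDensity (ρ₂ i)) ∧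
    ρ = ∑ i, (p i : ℂ) • ((ρ₁ i) ⊗ₖ (ρ₂ i))

/-- The rank-one projector |v⟩⟨v| onto a vector v. -/
noncomputable def proj {n : Type*} [Fintype n] (v : n → ℂ) : Matrix n n ℂ :=
  Matrix.vecMulVec v (star v)

/-- The four Bell vectors ψ₁,ψ₂,ψ₃,ψ₄ on ℂ²⊗ℂ². -/
noncomputable def bell (i : Fin 4) (p : Fin 2 × Fin 2) : ℂ :=
  (((Real.sqrt 2 : ℝ) : ℂ))⁻¹ *
    (if i = 0 then (if p = (0, 0) then 1 else if p = (1, 1) then 1 else 0)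
     else if i = 1 then (if p = (0, 0) then 1 else if p = (1, 1) then -1 else 0)
     else if i = 2 then (if p = (0, 1) then 1 else if p = (1, 0) then 1 else 0)
     else (if p = (0, 1) then 1 else if p = (1, 0) then -1 else 0))

/-!
Against a product state, Ψ₁ gives tr(Ψ₁ (A ⊗ B)) = ½ Σᵢⱼ Aᵢⱼ Bᵢⱼ = ½ tr(A Bᵀ) ≤ ½, so every
separable ρ lies in the half-space {tr ρ = 1, re tr(Ψ₁ ρ) ≤ ½}. The Werner state
W = 𝟙/6 + Ψ₁/3 is the Hilbert–Schmidt projection of Ψ₁ onto that half-space: W − Ψ₁ makes a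
non-obtuse angle with ρ − W for every such ρ, hence ‖ρ − Ψ₁‖² ≥ ‖W − Ψ₁‖² = 1/3. Finally W is
itself separable, being the average of P_u ⊗ P_ū over the six eigenvectors u of the Pauli
matrices.
-/

section HilbertSchmidt

variable {n : Type*} [Fintype n]

lemma hsNormSq_nonneg (A : Matrix n n ℂ) : 0 ≤ hsNormSq A :=
  (Complex.nonneg_iff.mp (posSemidef_conjTranspose_mul_self A).trace_nonneg).1

lemma hsNormSq_add (A B : Matrix n n ℂ) :
    hsNormSq (A + B) = hsNormSq A + 2 * (Aᴴ * B).trace.re + hsNormSq B := by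
  have hswap : (Bᴴ * A).trace.re = (Aᴴ * B).trace.re :=
    calc (Bᴴ * A).trace.re = (Aᴴ * B)ᴴ.trace.re := by
          rw [conjTranspose_mul, conjTranspose_conjTranspose]
      _ = (Aᴴ * B).trace.re := by rw [trace_conjTranspose, Complex.star_def, Complex.conj_re]
  simp only [hsNormSq, conjTranspose_add, Matrix.add_mul, Matrix.mul_add, trace_add,
    Complex.add_re]
  linarith

lemma hsNormSq_sub_le_of_re_trace_nonneg {Ψ W ρ : Matrix n n ℂ}
    (h : 0 ≤ ((W - Ψ)ᴴ * (ρ - W)).trace.re) : hsNormSq (W - Ψ) ≤ hsNormSq (ρ - Ψ) := by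
  have hexpand := hsNormSq_add (W - Ψ) (ρ - W)
  rw [sub_add_sub_cancel'] at hexpand
  linarith [hsNormSq_nonneg (ρ - W)]

end HilbertSchmidt

namespace Matrix.PosSemidef

variable {n : Type*}

lemma re_apply_self_nonneg {A : Matrix n n ℂ} (hA : A.PosSemidef) (i : n) : 0 ≤ (A i i).re :=
  (Complex.nonneg_iff.mp hA.diag_nonneg).1

lemma normSq_apply_le {A : Matrix n n ℂ} (hA : A.PosSemidef) (i j : n) :
    Complex.normSq (A i j) ≤ (A i i).re * (A j j).re := by
  have hdet := (hA.submatrix ![i, j]).det_nonneg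
  rw [det_fin_two] at hdet
  simp only [submatrix_apply, cons_val_zero, cons_val_one] at hdet
  rw [← hA.isHermitian.apply j i, Complex.star_def, Complex.mul_conj] at hdet
  have him : ∀ k, (A k k).im = 0 := fun k => Complex.conj_eq_iff_im.mp (hA.isHermitian.apply k k)
  have hre := (Complex.nonneg_iff.mp hdet).1
  simp only [Complex.sub_re, Complex.mul_re, him, Complex.ofReal_re] at hre
  linarith

lemma re_mul_apply_le {A B : Matrix n n ℂ} (hA : A.PosSemidef) (hB : B.PosSemidef) (i j : n) :
    (A i j * B i j).re ≤ ((A i i).re * (B j j).re + (A j j).re * (B i i).re) / 2 := by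
  have hnorm : (‖A i j‖ * ‖B i j‖) ^ 2 ≤ ((A i i).re * (B j j).re) * ((A j j).re * (B i i).re) :=
    calc (‖A i j‖ * ‖B i j‖) ^ 2 = Complex.normSq (A i j) * Complex.normSq (B i j) := by
          rw [mul_pow, Complex.normSq_eq_norm_sq, Complex.normSq_eq_norm_sq]
      _ ≤ ((A i i).re * (A j j).re) * ((B i i).re * (B j j).re) :=
          mul_le_mul (hA.normSq_apply_le i j) (hB.normSq_apply_le i j) (Complex.normSq_nonneg _)
            (mul_nonneg (hA.re_apply_self_nonneg i) (hA.re_apply_self_nonneg j))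
      _ = ((A i i).re * (B j j).re) * ((A j j).re * (B i i).re) := by ring
  have hre : (A i j * B i j).re ≤ ‖A i j‖ * ‖B i j‖ :=
    (Complex.re_le_norm _).trans (norm_mul _ _).le
  have hAB := mul_nonneg (hA.re_apply_self_nonneg i) (hB.re_apply_self_nonneg j)
  have hBA := mul_nonneg (hA.re_apply_self_nonneg j) (hB.re_apply_self_nonneg i)
  nlinarith [sq_nonneg ((A i i).re * (B j j).re - (A j j).re * (B i i).re),
    norm_nonneg (A i j), norm_nonneg (B i j)]

lemma re_sum_mul_apply_le [Fintype n] {A B : Matrix n n ℂ} (hA : A.PosSemidef)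
    (hB : B.PosSemidef) : (∑ i, ∑ j, A i j * B i j).re ≤ A.trace.re * B.trace.re :=
  calc (∑ i, ∑ j, A i j * B i j).re
      ≤ ∑ i, ∑ j, ((A i i).re * (B j j).re + (A j j).re * (B i i).re) / 2 := by
        simp only [Complex.re_sum]
        exact Finset.sum_le_sum fun i _ => Finset.sum_le_sum fun j _ => hA.re_mul_apply_le hB i j
    _ = A.trace.re * B.trace.re := by
        simp only [add_div, Finset.sum_add_distrib]
        rw [Finset.sum_comm (f := fun i j => (A j j).re * (B i i).re / 2)]
        simp only [trace, diag_apply, Complex.re_sum, Finset.sum_mul_sum,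
          ← Finset.sum_add_distrib, add_halves]

end Matrix.PosSemidef

section Separable

variable {m n : Type*} [Fintype m] [Fintype n] [DecidableEq m] [DecidableEq n]
  {ρ : Matrix (m × n) (m × n) ℂ}

lemma IsSepState.trace_eq_one (hρ : IsSepState ρ) : ρ.trace = 1 := by
  obtain ⟨k, p, ρ₁, ρ₂, -, hp, hρ₁, hρ₂, rfl⟩ := hρ
  simp only [trace_sum, trace_smul, trace_kronecker, (hρ₁ _).2, (hρ₂ _).2, mul_one, smul_eq_mul]
  exact_mod_cast hp

lemma IsSepState.re_trace_mul_le (hρ : IsSepState ρ) (X : Matrix (m × n) (m × n) ℂ) {c : ℝ}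
    (hX : ∀ A B, IsDensity A → IsDensity B → (X * (A ⊗ₖ B)).trace.re ≤ c) :
    (X * ρ).trace.re ≤ c := by
  obtain ⟨k, p, ρ₁, ρ₂, hp₀, hp, hρ₁, hρ₂, rfl⟩ := hρ
  calc (X * ∑ i, (p i : ℂ) • (ρ₁ i ⊗ₖ ρ₂ i)).trace.re
      = ∑ i, p i * (X * (ρ₁ i ⊗ₖ ρ₂ i)).trace.re := by
        simp [Matrix.mul_sum, trace_sum, Complex.re_sum]
    _ ≤ ∑ i, p i * c :=
        Finset.sum_le_sum fun i _ => mul_le_mul_of_nonneg_left (hX _ _ (hρ₁ i) (hρ₂ i)) (hp₀ i)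
    _ = c := by rw [← Finset.sum_mul, hp, one_mul]

end Separable

section Projector

variable {n : Type*} [Fintype n] {v : n → ℂ}

lemma isDensity_proj [DecidableEq n] (hv : star v ⬝ᵥ v = 1) : IsDensity (proj v) :=
  ⟨posSemidef_vecMulVec_self_star v, by rw [proj, trace_vecMulVec, dotProduct_comm, hv]⟩

lemma proj_mul_self (hv : star v ⬝ᵥ v = 1) : proj v * proj v = proj v := by
  rw [proj, vecMulVec_mul_vecMulVec, hv, one_smul]

end Projector

lemma ofReal_sqrt_two_sq : ((Real.sqrt 2 : ℝ) : ℂ) ^ 2 = 2 := by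
  rw [← Complex.ofReal_pow, Real.sq_sqrt zero_le_two, Complex.ofReal_ofNat]

lemma ofReal_sqrt_two_inv_mul_self :
    ((Real.sqrt 2 : ℝ) : ℂ)⁻¹ * ((Real.sqrt 2 : ℝ) : ℂ)⁻¹ = 1 / 2 := by
  rw [← mul_inv, ← sq, ofReal_sqrt_two_sq, one_div]

section Bell

local notation "Ψ₁" => proj (bell 0)

lemma bell_zero_apply (i j : Fin 2) :
    bell 0 (i, j) = if i = j then ((Real.sqrt 2 : ℝ) : ℂ)⁻¹ else 0 := by
  fin_cases i <;> fin_cases j <;> simp [bell]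

lemma star_bell_zero_dotProduct : star (bell 0) ⬝ᵥ bell 0 = 1 := by
  simp [dotProduct, Fintype.sum_prod_type, bell_zero_apply, Complex.conj_ofReal,
    ofReal_sqrt_two_inv_mul_self]

lemma trace_proj_bell_zero : (Ψ₁).trace = 1 :=
  (isDensity_proj star_bell_zero_dotProduct).2

lemma proj_bell_zero_apply (i i' j j' : Fin 2) :
    Ψ₁ (i, i') (j, j') = if i = i' ∧ j = j' then 1 / 2 else 0 := by
  simp only [proj, vecMulVec_apply, Pi.star_apply, bell_zero_apply]
  split_ifs <;> simp_all [Complex.conj_ofReal, ofReal_sqrt_two_inv_mul_self]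

lemma trace_proj_bell_zero_mul_kronecker (A B : Matrix (Fin 2) (Fin 2) ℂ) :
    (Ψ₁ * (A ⊗ₖ B)).trace = (∑ i, ∑ j, A i j * B i j) / 2 := by
  simp only [trace, diag_apply, mul_apply, kroneckerMap_apply, Fintype.sum_prod_type,
    Fin.sum_univ_two, proj_bell_zero_apply, and_true, and_false, one_div, ite_mul, zero_mul,
    zero_ne_one, one_ne_zero, ↓reduceIte, add_zero, zero_add]
  ring

lemma re_trace_proj_bell_zero_mul_kronecker_le {A B : Matrix (Fin 2) (Fin 2) ℂ}
    (hA : IsDensity A) (hB : IsDensity B) : (Ψ₁ * (A ⊗ₖ B)).trace.re ≤ 1 / 2 := by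
  have hAB := hA.1.re_sum_mul_apply_le hB.1
  rw [hA.2, hB.2, Complex.one_re, one_mul] at hAB
  rw [trace_proj_bell_zero_mul_kronecker, Complex.div_ofNat_re]
  linarith

noncomputable def wernerBell : Matrix (Fin 2 × Fin 2) (Fin 2 × Fin 2) ℂ :=
  (6 : ℂ)⁻¹ • 1 + (3 : ℂ)⁻¹ • Ψ₁

lemma trace_wernerBell : wernerBell.trace = 1 := by
  norm_num [wernerBell, trace_proj_bell_zero]

lemma trace_proj_bell_zero_mul_wernerBell : (Ψ₁ * wernerBell).trace = 1 / 2 := by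
  norm_num [wernerBell, Matrix.mul_add, proj_mul_self star_bell_zero_dotProduct,
    trace_proj_bell_zero]

lemma trace_conjTranspose_wernerBell_sub_mul (X : Matrix (Fin 2 × Fin 2) (Fin 2 × Fin 2) ℂ) :
    ((wernerBell - Ψ₁)ᴴ * X).trace = 6⁻¹ * X.trace - 2 / 3 * (Ψ₁ * X).trace := by
  have hΨ : (Ψ₁)ᴴ = Ψ₁ := (posSemidef_vecMulVec_self_star (bell 0)).isHermitian.eq
  have hE : wernerBell - Ψ₁ = (6 : ℂ)⁻¹ • 1 - (2 / 3 : ℂ) • Ψ₁ := by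
    rw [wernerBell]; module
  simp [hE, hΨ, Matrix.sub_mul]

lemma hsNormSq_wernerBell_sub_proj : hsNormSq (wernerBell - Ψ₁) = 1 / 3 := by
  rw [hsNormSq, trace_conjTranspose_wernerBell_sub_mul, Matrix.mul_sub, trace_sub, trace_sub,
    trace_wernerBell, trace_proj_bell_zero_mul_wernerBell,
    proj_mul_self star_bell_zero_dotProduct, trace_proj_bell_zero]
  norm_num

lemma re_trace_conjTranspose_wernerBell_sub_mul_nonneg
    {ρ : Matrix (Fin 2 × Fin 2) (Fin 2 × Fin 2) ℂ} (htr : ρ.trace = 1)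
    (hΨ : (Ψ₁ * ρ).trace.re ≤ 1 / 2) :
    0 ≤ ((wernerBell - Ψ₁)ᴴ * (ρ - wernerBell)).trace.re := by
  rw [trace_conjTranspose_wernerBell_sub_mul, Matrix.mul_sub, trace_sub, trace_sub, htr,
    trace_wernerBell, trace_proj_bell_zero_mul_wernerBell, sub_self, mul_zero, zero_sub,
    Complex.neg_re, Complex.mul_re, Complex.sub_re]
  norm_num
  linarith

lemma hsNormSq_wernerBell_sub_le {ρ : Matrix (Fin 2 × Fin 2) (Fin 2 × Fin 2) ℂ}
    (hρ : IsSepState ρ) : hsNormSq (wernerBell - Ψ₁) ≤ hsNormSq (ρ - Ψ₁) :=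
  hsNormSq_sub_le_of_re_trace_nonneg <|
    re_trace_conjTranspose_wernerBell_sub_mul_nonneg hρ.trace_eq_one <|
      hρ.re_trace_mul_le _ fun _ _ => re_trace_proj_bell_zero_mul_kronecker_le

noncomputable def pauliEigenvector : Fin 6 → Fin 2 → ℂ :=
  let c : ℂ := ((Real.sqrt 2 : ℝ) : ℂ)⁻¹
  ![![c, c], ![c, -c], ![c, Complex.I * c], ![c, -(Complex.I * c)], ![1, 0], ![0, 1]]

lemma star_pauliEigenvector_dotProduct (k : Fin 6) :
    star (pauliEigenvector k) ⬝ᵥ pauliEigenvector k = 1 := by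
  fin_cases k <;> norm_num [pauliEigenvector, dotProduct, Fin.sum_univ_two, Complex.conj_ofReal] <;>
    ring_nf <;> norm_num [ofReal_sqrt_two_sq]

lemma wernerBell_eq_sum :
    wernerBell = ∑ k : Fin 6, ((1 / 6 : ℝ) : ℂ) •
      (proj (pauliEigenvector k) ⊗ₖ proj (star (pauliEigenvector k))) := by
  have hpow4 : ((Real.sqrt 2 : ℝ) : ℂ) ^ 4 = 4 := by
    rw [show 4 = 2 * 2 from rfl, pow_mul, ofReal_sqrt_two_sq]; norm_num
  ext ⟨i, i'⟩ ⟨j, j'⟩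
  simp only [wernerBell, Matrix.add_apply, Matrix.smul_apply, proj_bell_zero_apply,
    Matrix.sum_apply, kroneckerMap_apply, Fin.sum_univ_six]
  simp only [proj, vecMulVec_apply, Pi.star_apply, star_star]
  fin_cases i <;> fin_cases i' <;> fin_cases j <;> fin_cases j' <;>
    simp [pauliEigenvector, one_apply, Complex.conj_ofReal] <;> ring_nf <;> norm_num [hpow4]

lemma isSepState_wernerBell : IsSepState wernerBell :=
  ⟨6, fun _ => 1 / 6, fun k => proj (pauliEigenvector k), fun k => proj (star (pauliEigenvector k)),
    fun _ => by norm_num, by norm_num,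
    fun k => isDensity_proj (star_pauliEigenvector_dotProduct k),
    fun k => isDensity_proj (by rw [star_star, dotProduct_comm, star_pauliEigenvector_dotProduct]),
    wernerBell_eq_sum⟩

end Bell

/-- The HS-entanglement of the Bell state Ψ₁ equals 1/3, attained at the
Werner state W_{ψ₁,1/3} = (1/6)𝟙 + (1/3)Ψ₁. -/
theorem EHS_bell_eq_third :
    IsLeast {x | ∃ ρ, IsSepState ρ ∧ x = hsNormSq (ρ - proj (bell 0))} (1 / 3)
    ∧ IsSepState ((6 : ℂ)⁻¹ • (1 : Matrix (Fin 2 × Fin 2) (Fin 2 × Fin 2) ℂ)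
        + (3 : ℂ)⁻¹ • proj (bell 0))
    ∧ hsNormSq (((6 : ℂ)⁻¹ • (1 : Matrix (Fin 2 × Fin 2) (Fin 2 × Fin 2) ℂ)
        + (3 : ℂ)⁻¹ • proj (bell 0)) - proj (bell 0)) = 1 / 3 := by
  refine ⟨⟨⟨wernerBell, isSepState_wernerBell, hsNormSq_wernerBell_sub_proj.symm⟩, ?_⟩,
    isSepState_wernerBell, hsNormSq_wernerBell_sub_proj⟩
  rintro _ ⟨ρ, hρ, rfl⟩
  exact hsNormSq_wernerBell_sub_proj ▸ hsNormSq_wernerBell_sub_le hρ
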